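/- arXiv:1510.01222 — 4 statements merged into one kernel-verified Lean document; each statement's English description precedes it below -/
import Mathlib

section
/- For w ∈ W, one has ℓ(w) = d_w if and only if w can be written as a product of pairwise distinct simple reflections. -/
/-- The number of inversions of a permutation of `Fin n`. -/
def numInversions {n : ℕ} (σ : Equiv.Perm (Fin n)) : ℕ :=
  (Finset.univ.filter fun p : Fin n × Fin n => p.1 < p.2 ∧ σ p.2 < σ p.1).card

/-- The length of `w ∈ W = ∏_{τ ∈ I} S_n`: the sum of the inversion numbers of its
coordinates. -/
def lenW {I : Type*} [Fintype I] {n : ℕ} (w : I → Equiv.Perm (Fin n)) : ℕ :=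
  ∑ τ, numInversions (w τ)

/-- The standard basis vector `e_{τ,i}` of `X = ⊕_{τ ∈ I} ℤ^n`. -/
def basisVec {I : Type*} [DecidableEq I] {n : ℕ} (τ : I) (i : Fin n) : I → Fin n → ℤ :=
  fun σ j => if σ = τ ∧ j = i then 1 else 0

/-- A root of `X`: an element of the form `e_{τ,i} - e_{τ,j}` with `i ≠ j`. -/
def IsRoot {I : Type*} [DecidableEq I] {n : ℕ} (x : I → Fin n → ℤ) : Prop :=
  ∃ (τ : I) (i j : Fin n), i ≠ j ∧ x = basisVec τ i - basisVec τ j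

/-- The action of `w ∈ W` on `X`, permuting the standard basis within each block:
`w · e_{τ,i} = e_{τ, w_τ(i)}`. -/
def actW {I : Type*} {n : ℕ} (w : I → Equiv.Perm (Fin n)) (x : I → Fin n → ℤ) :
    I → Fin n → ℤ :=
  fun τ i => x τ ((w τ)⁻¹ i)

/-- `d_w`: the rank of the ℤ-submodule of `X` generated by the elements `w·α - α`,
`α` running over the roots. -/
noncomputable def dW {I : Type*} [DecidableEq I] {n : ℕ} (w : I → Equiv.Perm (Fin n)) : ℕ :=
  Module.finrank ℤ
    (Submodule.span ℤ {y : I → Fin n → ℤ | ∃ x, IsRoot x ∧ y = actW w x - x})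

/-- A simple reflection of `W`: an element equal to an adjacent transposition `(i, i+1)` in
exactly one coordinate `τ₀` and to the identity in all other coordinates. -/
def IsSimpleReflection {I : Type*} {n : ℕ} (w : I → Equiv.Perm (Fin n)) : Prop :=
  ∃ (τ₀ : I) (i : Fin n) (h : (i : ℕ) + 1 < n),
    w τ₀ = Equiv.swap i ⟨(i : ℕ) + 1, h⟩ ∧ ∀ τ, τ ≠ τ₀ → w τ = 1


open Finset

section Inv

variable {n : ℕ}

lemma swap_lt_iff {i : Fin n} (h : (i : ℕ) + 1 < n) {x y : Fin n} (hxy : x ≠ y)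
    (h1 : ¬(x = i ∧ y = ⟨(i : ℕ) + 1, h⟩)) (h2 : ¬(x = ⟨(i : ℕ) + 1, h⟩ ∧ y = i)) :
    (Equiv.swap i ⟨(i : ℕ) + 1, h⟩ x < Equiv.swap i ⟨(i : ℕ) + 1, h⟩ y ↔ x < y) := by
  set i' : Fin n := ⟨(i : ℕ) + 1, h⟩ with hi'
  have hval : (i' : ℕ) = (i : ℕ) + 1 := rfl
  have hv : ∀ a b : Fin n, a ≠ b → (a : ℕ) ≠ (b : ℕ) := fun a b hab hc => hab (Fin.ext hc)
  have e3 : ∀ z, z ≠ i → z ≠ i' → Equiv.swap i i' z = z := fun z =>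
    Equiv.swap_apply_of_ne_of_ne
  rcases eq_or_ne x i with rfl | hxi
  · rcases eq_or_ne y i' with rfl | hyi'
    · exact absurd ⟨rfl, rfl⟩ h1
    · have hyi : y ≠ x := hxy.symm
      rw [Equiv.swap_apply_left, e3 y hyi hyi']
      have := hv y x hyi; have := hv y i' hyi'
      simp only [Fin.lt_def, hval] at *
      omega
  · rcases eq_or_ne x i' with rfl | hxi'
    · rcases eq_or_ne y i with rfl | hyi
      · exact absurd ⟨rfl, rfl⟩ h2
      · have hyi' : y ≠ i' := hxy.symm
        rw [Equiv.swap_apply_right, e3 y hyi hyi']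
        have := hv y i hyi; have := hv y i' hyi'
        simp only [Fin.lt_def, hval] at *
        omega
    · rw [e3 x hxi hxi']
      rcases eq_or_ne y i with hye | hyi
      · rw [hye, Equiv.swap_apply_left]
        have := hv x i hxi; have := hv x i' hxi'
        simp only [Fin.lt_def, hval] at *
        omega
      · rcases eq_or_ne y i' with hye | hyi'
        · rw [hye, Equiv.swap_apply_right]
          have := hv x i hxi; have := hv x i' hxi'
          simp only [Fin.lt_def, hval] at *
          omega
        · rw [e3 y hyi hyi']

lemma numInversions_swap_mul {σ : Equiv.Perm (Fin n)} {i : Fin n} (h : (i : ℕ) + 1 < n)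
    (hd : σ⁻¹ i < σ⁻¹ ⟨(i : ℕ) + 1, h⟩) :
    numInversions (Equiv.swap i ⟨(i : ℕ) + 1, h⟩ * σ) = numInversions σ + 1 := by
  set i' : Fin n := ⟨(i : ℕ) + 1, h⟩ with hi'
  set t := Equiv.swap i i' with ht
  set a := σ⁻¹ i with ha
  set b := σ⁻¹ i' with hb
  have hii' : i < i' := by simp [hi', Fin.lt_def]
  have hσa : σ a = i := σ.apply_symm_apply i
  have hσb : σ b = i' := σ.apply_symm_apply i'
  have hF : (Finset.univ.filter fun p : Fin n × Fin n => p.1 < p.2 ∧ (t * σ) p.2 < (t * σ) p.1)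
      = insert (a, b) (Finset.univ.filter fun p : Fin n × Fin n => p.1 < p.2 ∧ σ p.2 < σ p.1) := by
    ext p
    simp only [mem_filter, mem_insert, mem_univ, true_and]; simp only [Equiv.Perm.mul_apply]
    constructor
    · rintro ⟨hp1, hp2⟩
      by_cases hp : p = (a, b)
      · exact Or.inl hp
      · refine Or.inr ⟨hp1, ?_⟩
        have hne : σ p.2 ≠ σ p.1 := fun hc => absurd (σ.injective hc) (ne_of_gt hp1)
        refine (swap_lt_iff h hne ?_ ?_).mp hp2
        · rintro ⟨hx, hy⟩
          have h2a : p.2 = a := σ.injective (by rw [hx, hσa])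
          have h1b : p.1 = b := σ.injective (by rw [hy, hσb])
          rw [h2a, h1b] at hp1
          exact absurd hd (not_lt_of_gt hp1)
        · rintro ⟨hx, hy⟩
          exact hp (Prod.ext (σ.injective (by rw [hy, hσa])) (σ.injective (by rw [hx, hσb])))
    · rintro (hp | ⟨hp1, hp2⟩)
      · subst hp
        refine ⟨hd, ?_⟩
        simp only [hσa, hσb]
        rw [Equiv.swap_apply_left, Equiv.swap_apply_right]
        exact hii'
      · refine ⟨hp1, ?_⟩
        have hne : σ p.2 ≠ σ p.1 := fun hc => absurd (σ.injective hc) (ne_of_gt hp1)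
        refine (swap_lt_iff h hne ?_ ?_).mpr hp2
        · rintro ⟨hx, hy⟩
          have h2a : p.2 = a := σ.injective (by rw [hx, hσa])
          have h1b : p.1 = b := σ.injective (by rw [hy, hσb])
          rw [h2a, h1b] at hp1
          exact absurd hd (not_lt_of_gt hp1)
        · rintro ⟨hx, hy⟩
          rw [hx, hy] at hp2
          exact absurd hp2 (not_lt_of_gt hii')
  have hnot : (a, b) ∉ (Finset.univ.filter fun p : Fin n × Fin n => p.1 < p.2 ∧ σ p.2 < σ p.1) := by
    simp only [mem_filter, mem_univ, true_and, not_and, hσa, hσb]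
    intro _
    exact not_lt_of_gt hii'
  rw [numInversions, numInversions, hF, card_insert_of_notMem hnot]

lemma numInversions_swap_mul' {σ : Equiv.Perm (Fin n)} {i : Fin n} (h : (i : ℕ) + 1 < n)
    (hd : σ⁻¹ ⟨(i : ℕ) + 1, h⟩ < σ⁻¹ i) :
    numInversions σ = numInversions (Equiv.swap i ⟨(i : ℕ) + 1, h⟩ * σ) + 1 := by
  set i' : Fin n := ⟨(i : ℕ) + 1, h⟩ with hi'
  set t := Equiv.swap i i' with ht
  have h1 : (t * σ)⁻¹ i = σ⁻¹ i' := by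
    rw [mul_inv_rev, Equiv.Perm.mul_apply]
    congr 1
    rw [ht, Equiv.swap_inv, Equiv.swap_apply_left]
  have h2 : (t * σ)⁻¹ i' = σ⁻¹ i := by
    rw [mul_inv_rev, Equiv.Perm.mul_apply]
    congr 1
    rw [ht, Equiv.swap_inv, Equiv.swap_apply_right]
  have := numInversions_swap_mul h (σ := t * σ) (by rw [h1, h2]; exact hd)
  rwa [← mul_assoc, ← ht, Equiv.swap_mul_self, one_mul] at this

lemma eq_one_of_strictMono {σ : Equiv.Perm (Fin n)} (hs : StrictMono ⇑σ) : σ = 1 := by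
  haveI : WellFoundedLT (Fin n) := inferInstance
  have hs' : StrictMono (⇑σ⁻¹ : Fin n → Fin n) := by
    intro u v huv
    by_contra hc
    push_neg at hc
    have hvu : v ≤ u := by
      have := hs.monotone hc
      rwa [Equiv.Perm.inv_def, Equiv.apply_symm_apply, Equiv.apply_symm_apply] at this
    exact absurd huv (not_lt_of_ge hvu)
  refine Equiv.ext fun x => le_antisymm ?_ ?_
  · have h2 : σ x ≤ σ⁻¹ (σ x) := hs'.le_apply
    rwa [Equiv.Perm.inv_def, Equiv.symm_apply_apply] at h2
  · exact StrictMono.le_apply hs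

lemma eq_one_of_numInversions_eq_zero {σ : Equiv.Perm (Fin n)} (h0 : numInversions σ = 0) :
    σ = 1 := by
  rw [numInversions, Finset.card_eq_zero] at h0
  refine eq_one_of_strictMono fun x y hxy => ?_
  have hx : (x, y) ∉ (∅ : Finset (Fin n × Fin n)) := Finset.notMem_empty _
  rw [← h0] at hx
  simp only [mem_filter, mem_univ, true_and, not_and] at hx
  have hle : ¬ σ y < σ x := hx hxy
  exact lt_of_le_of_ne (le_of_not_gt hle)
    (fun hc => absurd (σ.injective hc) (ne_of_lt hxy))

lemma exists_descent {σ : Equiv.Perm (Fin n)} (hσ : σ ≠ 1) :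
    ∃ (i : Fin n) (h : (i : ℕ) + 1 < n), σ ⟨(i : ℕ) + 1, h⟩ < σ i := by
  by_contra hno
  push_neg at hno
  apply hσ
  have hcons : ∀ (i : Fin n) (h : (i : ℕ) + 1 < n), σ i < σ ⟨(i : ℕ) + 1, h⟩ := by
    intro i h
    refine lt_of_le_of_ne (hno i h) fun hc => ?_
    have := σ.injective hc
    simp [Fin.ext_iff] at this
  have key : ∀ (k : ℕ) (a b : Fin n), (b : ℕ) = (a : ℕ) + k + 1 → σ a < σ b := by
    intro k
    induction k with
    | zero =>
      intro a b hb
      have hbn : (b : ℕ) < n := b.isLt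
      have hlt : (a : ℕ) + 1 < n ∨ (a : ℕ) + 1 = (b : ℕ) := by omega
      have hlt' : (a : ℕ) + 1 < n := by omega
      have hbe : b = ⟨(a : ℕ) + 1, hlt'⟩ := Fin.ext (by simpa using hb)
      rw [hbe]
      exact hcons a hlt'
    | succ m ih =>
      intro a b hb
      have hbn : (b : ℕ) < n := b.isLt
      have hb' : (a : ℕ) + m + 1 < n := by omega
      set b' : Fin n := ⟨(a : ℕ) + m + 1, hb'⟩ with hbdef
      have h1 : σ a < σ b' := ih a b' rfl
      have h2 : ((b' : ℕ)) + 1 < n := by simp [hbdef]; omega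
      have hbe : b = ⟨(b' : ℕ) + 1, h2⟩ := Fin.ext (by simp [hbdef]; omega)
      rw [hbe]
      exact lt_trans h1 (hcons b' h2)
  refine eq_one_of_strictMono fun x y hxy => ?_
  have hyx : (y : ℕ) = (x : ℕ) + ((y : ℕ) - (x : ℕ) - 1) + 1 := by
    have := (Fin.lt_def).mp hxy; omega
  exact key ((y : ℕ) - (x : ℕ) - 1) x y hyx

end Inv

section W

variable {I : Type*} [DecidableEq I] {n : ℕ}

def simpleRefl (τ : I) (i : Fin n) (h : (i : ℕ) + 1 < n) : I → Equiv.Perm (Fin n) :=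
  fun σ => if σ = τ then Equiv.swap i ⟨(i : ℕ) + 1, h⟩ else 1

lemma simpleRefl_self (τ : I) (i : Fin n) (h : (i : ℕ) + 1 < n) :
    simpleRefl τ i h τ = Equiv.swap i ⟨(i : ℕ) + 1, h⟩ := by simp [simpleRefl]

lemma simpleRefl_other {τ σ : I} (hστ : σ ≠ τ) (i : Fin n) (h : (i : ℕ) + 1 < n) :
    simpleRefl τ i h σ = 1 := by simp [simpleRefl, hστ]

lemma isSimpleReflection_simpleRefl (τ : I) (i : Fin n) (h : (i : ℕ) + 1 < n) :
    IsSimpleReflection (simpleRefl τ i h) :=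
  ⟨τ, i, h, simpleRefl_self τ i h, fun _ hσ => simpleRefl_other hσ i h⟩

lemma swap_adj_ne_one {i : Fin n} (h : (i : ℕ) + 1 < n) :
    Equiv.swap i ⟨(i : ℕ) + 1, h⟩ ≠ 1 := by
  intro hc
  have h2 : Equiv.swap i ⟨(i : ℕ) + 1, h⟩ i = i := by rw [hc]; rfl
  rw [Equiv.swap_apply_left] at h2
  simp [Fin.ext_iff] at h2

lemma swap_adj_inj {i j : Fin n} (hi : (i : ℕ) + 1 < n) (hj : (j : ℕ) + 1 < n)
    (hc : Equiv.swap i ⟨(i : ℕ) + 1, hi⟩ = Equiv.swap j ⟨(j : ℕ) + 1, hj⟩) : i = j := by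
  by_cases h1 : i = j
  · exact h1
  exfalso
  have happ : Equiv.swap i ⟨(i : ℕ) + 1, hi⟩ i = Equiv.swap j ⟨(j : ℕ) + 1, hj⟩ i := by rw [hc]
  rw [Equiv.swap_apply_left] at happ
  by_cases h2 : i = (⟨(j : ℕ) + 1, hj⟩ : Fin n)
  · have h3 : Equiv.swap j ⟨(j : ℕ) + 1, hj⟩ i = j := by rw [h2, Equiv.swap_apply_right]
    rw [h3] at happ
    have e2 : (i : ℕ) = (j : ℕ) + 1 := congrArg Fin.val h2
    have e1 : (i : ℕ) + 1 = (j : ℕ) := congrArg Fin.val happ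
    omega
  · rw [Equiv.swap_apply_of_ne_of_ne h1 h2] at happ
    have h4 : (i : ℕ) + 1 = (i : ℕ) := congrArg Fin.val happ
    omega

lemma isSimple_iff {s : I → Equiv.Perm (Fin n)} :
    IsSimpleReflection s ↔
      ∃ (τ : I) (i : Fin n) (h : (i : ℕ) + 1 < n), s = simpleRefl τ i h := by
  constructor
  · rintro ⟨τ, i, h, h1, h2⟩
    refine ⟨τ, i, h, funext fun σ => ?_⟩
    by_cases hστ : σ = τ
    · rw [hστ, simpleRefl_self, h1]
    · rw [simpleRefl_other hστ, h2 σ hστ]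
  · rintro ⟨τ, i, h, rfl⟩
    exact isSimpleReflection_simpleRefl τ i h

lemma simpleRefl_inj {τ τ' : I} {i i' : Fin n} {h : (i : ℕ) + 1 < n} {h' : (i' : ℕ) + 1 < n}
    (hc : simpleRefl τ i h = simpleRefl τ' i' h') : τ = τ' ∧ i = i' := by
  have hττ : τ = τ' := by
    by_contra hne
    have h2 : simpleRefl τ i h τ = simpleRefl τ' i' h' τ := by rw [hc]
    rw [simpleRefl_self, simpleRefl_other hne] at h2
    exact swap_adj_ne_one h h2
  subst hττ
  have h2 : simpleRefl τ i h τ = simpleRefl τ i' h' τ := by rw [hc]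
  rw [simpleRefl_self, simpleRefl_self] at h2
  exact ⟨rfl, swap_adj_inj h h' h2⟩

lemma simpleRefl_mul_self (τ : I) (i : Fin n) (h : (i : ℕ) + 1 < n) :
    simpleRefl τ i h * simpleRefl τ i h = 1 := by
  funext σ
  by_cases hστ : σ = τ
  · simp [Pi.mul_apply, hστ, simpleRefl_self, Equiv.swap_mul_self]
  · simp [Pi.mul_apply, simpleRefl_other hστ]

/-- Block-preservation predicate. -/
def Pblk (i : Fin n) (σ : Equiv.Perm (Fin n)) : Prop := ∀ a : Fin n, a ≤ i → σ a ≤ i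

lemma pblk_one (i : Fin n) : Pblk i 1 := fun a ha => ha

lemma pblk_listProd {i : Fin n} {L : List (Equiv.Perm (Fin n))} (h : ∀ g ∈ L, Pblk i g) :
    Pblk i L.prod := by
  induction L with
  | nil => simpa using pblk_one i
  | cons g L ih =>
    rw [List.prod_cons]
    intro a ha
    rw [Equiv.Perm.mul_apply]
    exact h g (List.mem_cons_self) _ (ih (fun g' hg' => h g' (List.mem_cons_of_mem _ hg')) a ha)

lemma pblk_swap {i j : Fin n} (hj : (j : ℕ) + 1 < n) (hne : j ≠ i) :
    Pblk i (Equiv.swap j ⟨(j : ℕ) + 1, hj⟩) := by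
  intro a ha
  have hav : (a : ℕ) ≤ (i : ℕ) := ha
  by_cases h1 : a = j
  · rw [h1, Equiv.swap_apply_left]
    have : (j : ℕ) ≠ (i : ℕ) := fun hc => hne (Fin.ext hc)
    have : (j : ℕ) ≤ (i : ℕ) := by rw [← h1]; exact hav
    show (j : ℕ) + 1 ≤ (i : ℕ)
    omega
  · by_cases h2 : a = (⟨(j : ℕ) + 1, hj⟩ : Fin n)
    · rw [h2, Equiv.swap_apply_right]
      show (j : ℕ) ≤ (i : ℕ)
      have : (a : ℕ) = (j : ℕ) + 1 := by rw [h2]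
      omega
    · rw [Equiv.swap_apply_of_ne_of_ne h1 h2]
      exact ha

lemma pblk_image {i : Fin n} {σ : Equiv.Perm (Fin n)} (hσ : Pblk i σ) :
    (Finset.Iic i).image σ = Finset.Iic i := by
  apply Finset.eq_of_subset_of_card_le
  · intro b hb
    rw [Finset.mem_image] at hb
    obtain ⟨a, ha, rfl⟩ := hb
    rw [Finset.mem_Iic] at ha ⊢
    exact hσ a ha
  · rw [Finset.card_image_of_injective _ σ.injective]

lemma pblk_inv {i : Fin n} {σ : Equiv.Perm (Fin n)} (hσ : Pblk i σ) : Pblk i σ⁻¹ := by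
  intro a ha
  have : a ∈ (Finset.Iic i).image σ := by rw [pblk_image hσ]; exact Finset.mem_Iic.mpr ha
  rw [Finset.mem_image] at this
  obtain ⟨b, hb, hba⟩ := this
  rw [← hba, Equiv.Perm.inv_def, Equiv.symm_apply_apply]
  exact Finset.mem_Iic.mp hb

lemma pblk_gt {i : Fin n} {σ : Equiv.Perm (Fin n)} (hσ : Pblk i σ) {a : Fin n} (ha : i < a) :
    i < σ a := by
  by_contra hc
  push_neg at hc
  have := pblk_inv hσ _ hc
  rw [Equiv.Perm.inv_def, Equiv.symm_apply_apply] at this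
  exact absurd ha (not_lt_of_ge this)

lemma sblk {s : I → Equiv.Perm (Fin n)} {τ : I} {i : Fin n} {h : (i : ℕ) + 1 < n}
    (hs : IsSimpleReflection s) (hne : s ≠ simpleRefl τ i h) : Pblk i (s τ) := by
  obtain ⟨τ', j, hj, rfl⟩ := isSimple_iff.mp hs
  by_cases hττ : τ = τ'
  · subst hττ
    rw [simpleRefl_self]
    refine pblk_swap hj fun hji => ?_
    apply hne
    subst hji
    rfl
  · rw [simpleRefl_other (fun hc => hττ hc) j hj]
    exact pblk_one i

lemma listProd_apply (l : List (I → Equiv.Perm (Fin n))) (τ : I) :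
    l.prod τ = (l.map (fun s => s τ)).prod := by
  induction l with
  | nil => rfl
  | cons s l ih =>
    show (s * l.prod) τ = _
    rw [List.map_cons, List.prod_cons, Pi.mul_apply, ih]

lemma pblk_prod_of_not_mem {l : List (I → Equiv.Perm (Fin n))} {τ : I} {i : Fin n}
    {h : (i : ℕ) + 1 < n} (hs : ∀ s ∈ l, IsSimpleReflection s)
    (hns : simpleRefl τ i h ∉ l) : Pblk i (l.prod τ) := by
  rw [listProd_apply]
  apply pblk_listProd
  intro g hg
  rw [List.mem_map] at hg
  obtain ⟨s, hsl, rfl⟩ := hg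
  exact sblk (hs s hsl) (fun hc => hns (hc ▸ hsl))

end W

section Len

variable {I : Type*} [Fintype I] [DecidableEq I] {n : ℕ}

lemma lenW_eq_zero {w : I → Equiv.Perm (Fin n)} (h : lenW w = 0) : w = 1 := by
  rw [lenW, Finset.sum_eq_zero_iff] at h
  funext τ
  exact eq_one_of_numInversions_eq_zero (h τ (Finset.mem_univ τ))

lemma lenW_congr_aux (w w' : I → Equiv.Perm (Fin n)) (τ : I)
    (hother : ∀ σ, σ ≠ τ → w' σ = w σ) :
    lenW w' = numInversions (w' τ) + ∑ σ ∈ Finset.univ.erase τ, numInversions (w σ) := by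
  rw [lenW, ← Finset.add_sum_erase _ _ (Finset.mem_univ τ)]
  congr 1
  exact Finset.sum_congr rfl fun σ hσ =>
    congrArg _ (hother σ (Finset.mem_erase.mp hσ).1)

lemma lenW_simple_mul {w : I → Equiv.Perm (Fin n)} {τ : I} {i : Fin n} {h : (i : ℕ) + 1 < n}
    (hd : (w τ)⁻¹ i < (w τ)⁻¹ ⟨(i : ℕ) + 1, h⟩) :
    lenW (simpleRefl τ i h * w) = lenW w + 1 := by
  have hother : ∀ σ, σ ≠ τ → (simpleRefl τ i h * w) σ = w σ := fun σ hσ => by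
    rw [Pi.mul_apply, simpleRefl_other hσ, one_mul]
  rw [lenW_congr_aux w _ τ hother, Pi.mul_apply, simpleRefl_self,
    numInversions_swap_mul h hd, lenW, ← Finset.add_sum_erase _ _ (Finset.mem_univ τ)]
  omega

lemma lenW_simple_mul' {w : I → Equiv.Perm (Fin n)} {τ : I} {i : Fin n} {h : (i : ℕ) + 1 < n}
    (hd : (w τ)⁻¹ ⟨(i : ℕ) + 1, h⟩ < (w τ)⁻¹ i) :
    lenW w = lenW (simpleRefl τ i h * w) + 1 := by
  have hother : ∀ σ, σ ≠ τ → (simpleRefl τ i h * w) σ = w σ := fun σ hσ => by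
    rw [Pi.mul_apply, simpleRefl_other hσ, one_mul]
  have hrel := numInversions_swap_mul' h hd
  rw [lenW_congr_aux w _ τ hother, Pi.mul_apply, simpleRefl_self, lenW,
    ← Finset.add_sum_erase _ _ (Finset.mem_univ τ)]
  omega

end Len

section Qspace

variable {I : Type*} [Fintype I] [DecidableEq I] {n : ℕ}

def eQ (τ : I) (i : Fin n) : I → Fin n → ℚ := fun σ j => if σ = τ ∧ j = i then 1 else 0

def vQ (w : I → Equiv.Perm (Fin n)) (τ : I) (a : Fin n) : I → Fin n → ℚ :=
  eQ τ (w τ a) - eQ τ a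

def Vw (w : I → Equiv.Perm (Fin n)) : Submodule ℚ (I → Fin n → ℚ) :=
  Submodule.span ℚ (Set.range fun p : I × Fin n => vQ w p.1 p.2)

def betaQ (τ : I) (i : Fin n) (h : (i : ℕ) + 1 < n) : I → Fin n → ℚ :=
  eQ τ ⟨(i : ℕ) + 1, h⟩ - eQ τ i

lemma vQ_mem (w : I → Equiv.Perm (Fin n)) (τ : I) (a : Fin n) : vQ w τ a ∈ Vw w :=
  Submodule.subset_span ⟨(τ, a), rfl⟩

lemma vQ_one (τ : I) (a : Fin n) : vQ (1 : I → Equiv.Perm (Fin n)) τ a = 0 := by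
  show eQ τ ((1 : Equiv.Perm (Fin n)) a) - eQ τ a = 0
  rw [Equiv.Perm.one_apply, sub_self]

lemma Vw_one : Vw (1 : I → Equiv.Perm (Fin n)) = ⊥ := by
  rw [eq_bot_iff, Vw, Submodule.span_le]
  rintro x ⟨p, rfl⟩
  simp [vQ_one]

lemma vQ_mul (u v : I → Equiv.Perm (Fin n)) (τ : I) (a : Fin n) :
    vQ (u * v) τ a = vQ u τ (v τ a) + vQ v τ a := by
  show eQ τ ((u τ) ((v τ) a)) - eQ τ a = _
  rw [vQ, vQ]
  abel

lemma Vw_mul_le (u v : I → Equiv.Perm (Fin n)) : Vw (u * v) ≤ Vw u ⊔ Vw v := by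
  rw [Vw, Submodule.span_le]
  rintro x ⟨p, rfl⟩
  simp only [SetLike.mem_coe]
  rw [vQ_mul]
  exact add_mem (Submodule.mem_sup_left (vQ_mem u _ _)) (Submodule.mem_sup_right (vQ_mem v _ _))

lemma betaQ_ne_zero (τ : I) (i : Fin n) (h : (i : ℕ) + 1 < n) : betaQ τ i h ≠ 0 := by
  intro hc
  have h2 := congrFun (congrFun hc τ) (⟨(i : ℕ) + 1, h⟩ : Fin n)
  have hne : ((⟨(i : ℕ) + 1, h⟩ : Fin n) = i) = False := by
    simp [Fin.ext_iff]
  simp [betaQ, eQ, hne] at h2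

lemma Vw_simple (τ : I) (i : Fin n) (h : (i : ℕ) + 1 < n) :
    Vw (simpleRefl τ i h) = Submodule.span ℚ {betaQ τ i h} := by
  have hβv : betaQ τ i h = vQ (simpleRefl τ i h) τ i := by
    rw [vQ, simpleRefl_self, Equiv.swap_apply_left, betaQ]
  apply le_antisymm
  · rw [Vw, Submodule.span_le]
    rintro x ⟨⟨σ, a⟩, rfl⟩
    simp only [SetLike.mem_coe]
    show vQ (simpleRefl τ i h) σ a ∈ _
    by_cases hστ : σ = τ
    · subst hστ
      rw [vQ, simpleRefl_self]
      by_cases ha1 : a = i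
      · subst ha1
        rw [Equiv.swap_apply_left]
        exact Submodule.mem_span_singleton_self _
      · by_cases ha2 : a = (⟨(i : ℕ) + 1, h⟩ : Fin n)
        · subst ha2
          rw [Equiv.swap_apply_right]
          have : eQ σ i - eQ σ (⟨(i : ℕ) + 1, h⟩ : Fin n) = -betaQ σ i h := by
            rw [betaQ]; abel
          rw [this]
          exact neg_mem (Submodule.mem_span_singleton_self _)
        · rw [Equiv.swap_apply_of_ne_of_ne ha1 ha2, sub_self]
          exact zero_mem _
    · rw [vQ, simpleRefl_other hστ, Equiv.Perm.one_apply, sub_self]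
      exact zero_mem _
  · rw [Submodule.span_le, Set.singleton_subset_iff, SetLike.mem_coe, hβv]
    exact vQ_mem _ _ _

lemma sum_vQ_eq_beta {w : I → Equiv.Perm (Fin n)} {τ : I} {i : Fin n} {h : (i : ℕ) + 1 < n}
    {σ'' : Equiv.Perm (Fin n)} (hw : w τ = Equiv.swap i ⟨(i : ℕ) + 1, h⟩ * σ'')
    (hblk : Pblk i σ'') :
    ∑ a ∈ Finset.Iic i, vQ w τ a = betaQ τ i h := by
  have himg : (Finset.Iic i).image (w τ) = insert (⟨(i : ℕ) + 1, h⟩ : Fin n) (Finset.Iio i) := by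
    rw [hw]
    have h1 : (Finset.Iic i).image ⇑(Equiv.swap i ⟨(i : ℕ) + 1, h⟩ * σ'')
        = ((Finset.Iic i).image ⇑σ'').image ⇑(Equiv.swap i ⟨(i : ℕ) + 1, h⟩) := by
      rw [Finset.image_image]; rfl
    have heqon : ∀ a ∈ Finset.Iio i, Equiv.swap i ⟨(i : ℕ) + 1, h⟩ a = a := by
      intro a ha
      rw [Finset.mem_Iio] at ha
      refine Equiv.swap_apply_of_ne_of_ne (ne_of_lt ha) fun hc => ?_
      have h3 := congrArg Fin.val hc
      have h4 := (Fin.lt_def).mp ha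
      simp at h3
      omega
    rw [h1, pblk_image hblk, ← Finset.Iio_insert, Finset.image_insert, Equiv.swap_apply_left]
    congr 1
    rw [Finset.image_congr heqon, Finset.image_id']
  have hinj : ∀ x ∈ Finset.Iic i, ∀ y ∈ Finset.Iic i, w τ x = w τ y → x = y :=
    fun x _ y _ hxy => (w τ).injective hxy
  have hsplit : ∑ a ∈ Finset.Iic i, vQ w τ a
      = (∑ a ∈ Finset.Iic i, eQ τ (w τ a)) - ∑ a ∈ Finset.Iic i, eQ τ a := by
    rw [← Finset.sum_sub_distrib]; rfl
  have h2 : ∑ a ∈ Finset.Iic i, eQ τ (w τ a) = ∑ b ∈ (Finset.Iic i).image (w τ), eQ τ b :=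
    (Finset.sum_image hinj).symm
  have hnm1 : (⟨(i : ℕ) + 1, h⟩ : Fin n) ∉ Finset.Iio i := by
    rw [Finset.mem_Iio]
    intro hc
    have := (Fin.lt_def).mp hc
    simp at this
  have hnm2 : i ∉ Finset.Iio i := by simp
  rw [hsplit, h2, himg, Finset.sum_insert hnm1, ← Finset.Iio_insert,
    Finset.sum_insert hnm2, betaQ]
  abel

lemma beta_mem_head {l' : List (I → Equiv.Perm (Fin n))} {τ : I} {i : Fin n}
    {h : (i : ℕ) + 1 < n} (hs : ∀ s ∈ l', IsSimpleReflection s)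
    (hns : simpleRefl τ i h ∉ l') :
    betaQ τ i h ∈ Vw (simpleRefl τ i h * l'.prod) := by
  have hw : (simpleRefl τ i h * l'.prod) τ
      = Equiv.swap i ⟨(i : ℕ) + 1, h⟩ * (l'.prod τ) := by
    rw [Pi.mul_apply, simpleRefl_self]
  have hblk := pblk_prod_of_not_mem hs hns
  rw [← sum_vQ_eq_beta hw hblk]
  exact Submodule.sum_mem _ fun a _ => vQ_mem _ τ a

lemma beta_mem : ∀ (l : List (I → Equiv.Perm (Fin n))), (∀ s ∈ l, IsSimpleReflection s) →
    l.Nodup → ∀ (τ : I) (i : Fin n) (h : (i : ℕ) + 1 < n), simpleRefl τ i h ∈ l →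
    betaQ τ i h ∈ Vw l.prod := by
  intro l
  induction l with
  | nil => intro _ _ τ i h hmem; simp at hmem
  | cons s l' ih =>
    intro hs hnd τ i h hmem
    have hs' : ∀ s' ∈ l', IsSimpleReflection s' := fun s' h' => hs s' (List.mem_cons_of_mem _ h')
    have hsn : s ∉ l' := (List.nodup_cons.mp hnd).1
    rcases List.mem_cons.mp hmem with heq | hmem'
    · rw [List.prod_cons, ← heq]
      exact beta_mem_head hs' (heq ▸ hsn)
    · have hβ := ih hs' (List.nodup_cons.mp hnd).2 τ i h hmem'
      obtain ⟨τ', j, hj, hseq⟩ := isSimple_iff.mp (hs s (List.mem_cons_self))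
      subst hseq
      have hβ' : betaQ τ' j hj ∈ Vw ((simpleRefl τ' j hj :: l').prod) := by
        rw [List.prod_cons]
        exact beta_mem_head hs' hsn
      have hle : Vw l'.prod ≤ Vw ((simpleRefl τ' j hj :: l').prod) := by
        have h1 : l'.prod = simpleRefl τ' j hj * (simpleRefl τ' j hj :: l').prod := by
          rw [List.prod_cons, ← mul_assoc, simpleRefl_mul_self, one_mul]
        rw [h1]
        refine le_trans (Vw_mul_le _ _) (sup_le ?_ le_rfl)
        rw [Vw_simple, Submodule.span_le, Set.singleton_subset_iff]
        exact hβ'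
      exact hle hβ

end Qspace

section Indep

variable {I : Type*} [Fintype I] [DecidableEq I] {n : ℕ}

def toProd : (I → Fin n → ℚ) →ₗ[ℚ] (I × Fin n → ℚ) where
  toFun x := fun p => x p.1 p.2
  map_add' x y := rfl
  map_smul' c x := rfl

def psums : (I × Fin n → ℚ) →ₗ[ℚ] (I × Fin n → ℚ) where
  toFun x := fun p => -∑ k ∈ Finset.Iic p.2, x (p.1, k)
  map_add' x y := by
    funext p
    simp [Finset.sum_add_distrib]
    ring
  map_smul' c x := by
    funext p
    simp [Finset.mul_sum]

lemma sum_ite_Iic (q : Prop) [Decidable q] (m c : Fin n) :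
    ∑ k ∈ Finset.Iic m, (if q ∧ k = c then (1 : ℚ) else 0) = if q ∧ c ≤ m then 1 else 0 := by
  by_cases hq : q
  · simp only [hq, true_and]
    rw [Finset.sum_ite_eq' (Finset.Iic m) c (fun _ => (1 : ℚ))]
    simp [Finset.mem_Iic]
  · simp [hq]

lemma psums_toProd_beta (τ : I) (i : Fin n) (h : (i : ℕ) + 1 < n) :
    psums (toProd (betaQ τ i h)) = Pi.single ((τ, i) : I × Fin n) (1 : ℚ) := by
  funext p
  have e1 : psums (toProd (betaQ τ i h)) p
      = -∑ k ∈ Finset.Iic p.2, betaQ τ i h p.1 k := rfl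
  have e2 : ∀ k, betaQ τ i h p.1 k
      = (if p.1 = τ ∧ k = (⟨(i : ℕ) + 1, h⟩ : Fin n) then (1 : ℚ) else 0)
        - (if p.1 = τ ∧ k = i then (1 : ℚ) else 0) := fun k => rfl
  rw [e1]
  simp only [e2]
  rw [Finset.sum_sub_distrib, sum_ite_Iic, sum_ite_Iic, Pi.single_apply]
  have hc1 : ((⟨(i : ℕ) + 1, h⟩ : Fin n) ≤ p.2) ↔ ((i : ℕ) + 1 ≤ (p.2 : ℕ)) := Iff.rfl
  have hc2 : (i ≤ p.2) ↔ ((i : ℕ) ≤ (p.2 : ℕ)) := Iff.rfl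
  by_cases h1 : p.1 = τ
  · simp only [h1, true_and]
    by_cases h2 : (i : ℕ) ≤ (p.2 : ℕ)
    · by_cases h3 : (i : ℕ) + 1 ≤ (p.2 : ℕ)
      · rw [if_pos (hc1.mpr h3), if_pos (hc2.mpr h2), if_neg]
        · norm_num
        · intro hc
          have : (p.2 : ℕ) = (i : ℕ) := by rw [hc]
          omega
      · rw [if_neg (fun hc => h3 (hc1.mp hc)), if_pos (hc2.mpr h2), if_pos]
        · norm_num
        · have : p.2 = i := Fin.ext (by omega)
          rw [← h1, ← this]
    · have h3 : ¬ ((i : ℕ) + 1 ≤ (p.2 : ℕ)) := by omega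
      rw [if_neg (fun hc => h3 (hc1.mp hc)), if_neg (fun hc => h2 (hc2.mp hc)), if_neg]
      · norm_num
      · intro hc
        have : (p.2 : ℕ) = (i : ℕ) := by rw [hc]
        omega
  · simp only [h1, false_and, if_false]
    rw [if_neg]
    · norm_num
    · intro hc
      exact h1 (by rw [hc])

lemma beta_indep :
    LinearIndependent ℚ (fun j : {p : I × Fin n // (p.2 : ℕ) + 1 < n} =>
      betaQ j.1.1 j.1.2 j.2) := by
  have h2 : LinearIndependent ℚ (fun j : {p : I × Fin n // (p.2 : ℕ) + 1 < n} =>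
      (Pi.basisFun ℚ (I × Fin n)) j.1) :=
    (Pi.basisFun ℚ (I × Fin n)).linearIndependent.comp _ Subtype.val_injective
  have hcomp : (fun j : {p : I × Fin n // (p.2 : ℕ) + 1 < n} =>
      (psums ∘ₗ toProd) (betaQ j.1.1 j.1.2 j.2))
      = fun j => (Pi.basisFun ℚ (I × Fin n)) j.1 := by
    funext j
    show psums (toProd (betaQ j.1.1 j.1.2 j.2)) = _
    rw [psums_toProd_beta, Pi.basisFun_apply]
  rw [← hcomp] at h2
  exact LinearIndependent.of_comp (psums ∘ₗ toProd) h2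

end Indep

section Rank

variable {I : Type*} [Fintype I] [DecidableEq I] {n : ℕ}

lemma finrank_Vw_le_lenW : ∀ (N : ℕ) (w : I → Equiv.Perm (Fin n)), lenW w ≤ N →
    Module.finrank ℚ (Vw w) ≤ lenW w := by
  intro N
  induction N with
  | zero =>
    intro w hw
    rw [lenW_eq_zero (Nat.le_zero.mp hw), Vw_one, finrank_bot]
    exact Nat.zero_le _
  | succ N ih =>
    intro w hw
    by_cases h1 : w = 1
    · rw [h1, Vw_one, finrank_bot]
      exact Nat.zero_le _
    · have hτ : ∃ τ, w τ ≠ 1 := by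
        by_contra hc; push_neg at hc; exact h1 (funext hc)
      obtain ⟨τ, hτ⟩ := hτ
      have hτinv : (w τ)⁻¹ ≠ 1 := fun hc => hτ (by rw [← inv_inv (w τ), hc, inv_one])
      obtain ⟨i, h, hdesc⟩ := exists_descent hτinv
      have hlen : lenW w = lenW (simpleRefl τ i h * w) + 1 := lenW_simple_mul' hdesc
      set w' := simpleRefl τ i h * w with hw'
      have hws : w = simpleRefl τ i h * w' := by
        rw [hw', ← mul_assoc, simpleRefl_mul_self, one_mul]
      have hsub : Vw w ≤ Vw (simpleRefl τ i h) ⊔ Vw w' := by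
        conv_lhs => rw [hws]
        exact Vw_mul_le _ _
      have hr2 : Module.finrank ℚ (Vw (simpleRefl τ i h)) ≤ 1 := by
        rw [Vw_simple]
        exact le_of_eq (finrank_span_singleton (betaQ_ne_zero τ i h))
      have hsup := Submodule.finrank_sup_add_finrank_inf_eq (Vw (simpleRefl τ i h)) (Vw w')
      have hr3 := Submodule.finrank_mono hsub
      have hih := ih w' (by omega)
      omega

lemma numInversions_one : numInversions (1 : Equiv.Perm (Fin n)) = 0 := by
  rw [numInversions, Finset.card_eq_zero]
  ext p
  simp only [Finset.mem_filter, Finset.mem_univ, true_and,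
    Finset.notMem_empty, iff_false, not_and]; simp only [Equiv.Perm.one_apply]
  intro h1
  exact asymm h1

lemma lenW_one : lenW (1 : I → Equiv.Perm (Fin n)) = 0 := by
  rw [lenW]
  refine Finset.sum_eq_zero fun τ _ => ?_
  show numInversions (1 : Equiv.Perm (Fin n)) = 0
  exact numInversions_one

lemma lenW_prod : ∀ (l : List (I → Equiv.Perm (Fin n))), l.Nodup →
    (∀ s ∈ l, IsSimpleReflection s) → lenW l.prod = l.length := by
  intro l
  induction l with
  | nil => intro _ _; rw [List.prod_nil, lenW_one, List.length_nil]
  | cons s l' ih =>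
    intro hnd hs
    obtain ⟨τ, i, h, rfl⟩ := isSimple_iff.mp (hs s (List.mem_cons_self))
    have hsn : simpleRefl τ i h ∉ l' := (List.nodup_cons.mp hnd).1
    have hs' : ∀ s' ∈ l', IsSimpleReflection s' := fun s' h' => hs s' (List.mem_cons_of_mem _ h')
    have hblk := pblk_prod_of_not_mem hs' hsn
    have hinv := pblk_inv hblk
    have hd : (l'.prod τ)⁻¹ i < (l'.prod τ)⁻¹ ⟨(i : ℕ) + 1, h⟩ :=
      lt_of_le_of_lt (hinv i le_rfl)
        (pblk_gt hinv (show i < (⟨(i : ℕ) + 1, h⟩ : Fin n) by rw [Fin.lt_def]; simp))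
    rw [List.prod_cons, lenW_simple_mul hd, ih (List.nodup_cons.mp hnd).2 hs',
      List.length_cons]

lemma len_le_finrank_Vw (l : List (I → Equiv.Perm (Fin n))) (hnd : l.Nodup)
    (hs : ∀ s ∈ l, IsSimpleReflection s) :
    l.length ≤ Module.finrank ℚ (Vw l.prod) := by
  classical
  have hdata : ∀ k : Fin l.length, ∃ j : {p : I × Fin n // (p.2 : ℕ) + 1 < n},
      l.get k = simpleRefl j.1.1 j.1.2 j.2 := by
    intro k
    obtain ⟨τ, i, h, he⟩ := isSimple_iff.mp (hs _ (l.get_mem k))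
    exact ⟨⟨(τ, i), h⟩, he⟩
  choose dat hdat using hdata
  have hinj : Function.Injective dat := by
    intro k k' hkk
    have hg : l.get k = l.get k' := by rw [hdat k, hdat k', hkk]
    exact (List.nodup_iff_injective_get.mp hnd) hg
  have hind : LinearIndependent ℚ (fun k : Fin l.length =>
      betaQ (dat k).1.1 (dat k).1.2 (dat k).2) := beta_indep.comp dat hinj
  have hspan : Submodule.span ℚ
      (Set.range fun k : Fin l.length => betaQ (dat k).1.1 (dat k).1.2 (dat k).2)
      ≤ Vw l.prod := by
    rw [Submodule.span_le]
    rintro x ⟨k, rfl⟩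
    simp only [SetLike.mem_coe]
    refine beta_mem l hs hnd _ _ _ ?_
    rw [← hdat k]
    exact l.get_mem k
  calc l.length = Fintype.card (Fin l.length) := (Fintype.card_fin _).symm
    _ = Module.finrank ℚ (Submodule.span ℚ
        (Set.range fun k : Fin l.length => betaQ (dat k).1.1 (dat k).1.2 (dat k).2)) :=
      (finrank_span_eq_card hind).symm
    _ ≤ Module.finrank ℚ (Vw l.prod) := Submodule.finrank_mono hspan

end Rank

section Cast

variable {I : Type*} [Fintype I] [DecidableEq I] {n : ℕ}

def intCastL : (I → Fin n → ℤ) →ₗ[ℤ] (I → Fin n → ℚ) where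
  toFun x := fun τ i => ((x τ i : ℤ) : ℚ)
  map_add' x y := by funext τ i; simp
  map_smul' c x := by
    funext τ i
    simp only [Pi.smul_apply, smul_eq_mul, RingHom.id_apply, zsmul_eq_mul]
    push_cast
    ring

lemma intCastL_injective : Function.Injective (intCastL (I := I) (n := n)) := by
  intro x y hxy
  funext τ i
  have h2 : ((x τ i : ℤ) : ℚ) = ((y τ i : ℤ) : ℚ) := congrFun (congrFun hxy τ) i
  exact_mod_cast h2

lemma intCastL_zsmul (c : ℤ) (x : I → Fin n → ℤ) :
    intCastL (c • x) = (c : ℚ) • intCastL x := by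
  rw [map_smul, Int.cast_smul_eq_zsmul]

lemma finrank_int_span (S : Set (I → Fin n → ℤ)) :
    Module.finrank ℤ (Submodule.span ℤ S)
      = Module.finrank ℚ (Submodule.span ℚ (intCastL '' S)) := by
  classical
  set V := Submodule.span ℚ (intCastL '' S) with hV
  have hmemV : ∀ x ∈ Submodule.span ℤ S, intCastL x ∈ V := by
    intro x hx
    refine Submodule.span_induction ?_ ?_ ?_ ?_ hx
    · intro y hy
      exact Submodule.subset_span (Set.mem_image_of_mem _ hy)
    · rw [map_zero]; exact zero_mem V
    · intro y z _ _ hy hz; rw [map_add]; exact add_mem hy hz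
    · intro c y _ hy; rw [intCastL_zsmul]; exact Submodule.smul_mem _ _ hy
  haveI hfin : Module.Finite ℤ (Submodule.span ℤ S) :=
    Module.Finite.iff_fg.mpr (IsNoetherian.noetherian _)
  apply le_antisymm
  · let b := Module.Free.chooseBasis ℤ (Submodule.span ℤ S)
    have hb1 : LinearIndependent ℤ
        (fun k : Module.Free.ChooseBasisIndex ℤ (Submodule.span ℤ S) =>
          ((b k : I → Fin n → ℤ))) :=
      b.linearIndependent.map' (Submodule.span ℤ S).subtype (Submodule.ker_subtype _)
    have hb2 : LinearIndependent ℤ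
        (fun k : Module.Free.ChooseBasisIndex ℤ (Submodule.span ℤ S) =>
          intCastL (b k : I → Fin n → ℤ)) :=
      hb1.map' intCastL (LinearMap.ker_eq_bot.mpr intCastL_injective)
    have hb3 : LinearIndependent ℚ
        (fun k : Module.Free.ChooseBasisIndex ℤ (Submodule.span ℤ S) =>
          intCastL (b k : I → Fin n → ℤ)) :=
      (LinearIndependent.iff_fractionRing ℤ ℚ).mp hb2
    have hb4 : LinearIndependent ℚ
        (fun k : Module.Free.ChooseBasisIndex ℤ (Submodule.span ℤ S) =>
          (⟨intCastL (b k : I → Fin n → ℤ), hmemV _ (b k).2⟩ : V)) := by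
      apply LinearIndependent.of_comp V.subtype
      exact hb3
    have hcard := hb4.fintype_card_le_finrank
    rw [Module.finrank_eq_card_chooseBasisIndex]
    exact hcard
  · obtain ⟨T, hTS, hTspan, hTind⟩ := exists_linearIndependent ℚ (intCastL '' S)
    have hTfin : T.Finite := hTind.setFinite
    haveI := hTfin.fintype
    have hchoice : ∀ t : T, ∃ x, x ∈ S ∧ intCastL x = (t : I → Fin n → ℚ) := by
      intro t
      obtain ⟨x, hx1, hx2⟩ := hTS t.2
      exact ⟨x, hx1, hx2⟩
    choose g hg1 hg2 using hchoice
    have hgind : LinearIndependent ℤ g := by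
      apply LinearIndependent.of_comp intCastL
      have hcomp : ⇑intCastL ∘ g = (fun t : T => (t : I → Fin n → ℚ)) := funext hg2
      rw [hcomp]
      exact (LinearIndependent.iff_fractionRing ℤ ℚ).mpr hTind
    have hspanle : Submodule.span ℤ (Set.range g) ≤ Submodule.span ℤ S :=
      Submodule.span_mono (Set.range_subset_iff.mpr hg1)
    have hr1 : Module.finrank ℤ (Submodule.span ℤ (Set.range g)) = Fintype.card T :=
      finrank_span_eq_card hgind
    have hr2 := Submodule.finrank_mono (R := ℤ) hspanle
    have hVT : V = Submodule.span ℚ (Set.range ((↑) : T → (I → Fin n → ℚ))) := by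
      rw [Subtype.range_coe, hTspan]
    have hr3 : Module.finrank ℚ V = Fintype.card T := by
      rw [hVT]
      exact finrank_span_eq_card hTind
    omega

lemma actW_sub (w : I → Equiv.Perm (Fin n)) (x y : I → Fin n → ℤ) :
    actW w (x - y) = actW w x - actW w y := rfl

lemma actW_basisVec (w : I → Equiv.Perm (Fin n)) (τ : I) (i : Fin n) :
    actW w (basisVec τ i) = basisVec τ (w τ i) := by
  funext σ j
  show basisVec τ i σ ((w σ)⁻¹ j) = basisVec τ (w τ i) σ j
  rw [basisVec, basisVec]
  by_cases hστ : σ = τ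
  · subst hστ
    have heq : ((w σ)⁻¹ j = i) = (j = w σ i) := by
      apply propext
      constructor
      · intro hc; rw [← hc, Equiv.Perm.inv_def, Equiv.apply_symm_apply]
      · intro hc; rw [hc, Equiv.Perm.inv_def, Equiv.symm_apply_apply]
    simp only [heq]
  · simp only [hστ, false_and, if_false]

lemma intCastL_basisVec (τ : I) (i : Fin n) : intCastL (basisVec τ i) = eQ τ i := by
  funext σ j
  show ((if σ = τ ∧ j = i then (1 : ℤ) else 0 : ℤ) : ℚ) = _
  rw [eQ]
  split_ifs <;> simp

lemma spanQ_roots (hn : 1 ≤ n) (w : I → Equiv.Perm (Fin n)) :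
    Submodule.span ℚ (intCastL '' {y : I → Fin n → ℤ | ∃ x, IsRoot x ∧ y = actW w x - x})
      = Vw w := by
  have hcastdiff : ∀ (τ : I) (a b : Fin n),
      intCastL (actW w (basisVec τ a - basisVec τ b) - (basisVec τ a - basisVec τ b))
        = vQ w τ a - vQ w τ b := by
    intro τ a b
    rw [actW_sub, actW_basisVec, actW_basisVec, map_sub, map_sub, map_sub,
      intCastL_basisVec, intCastL_basisVec, intCastL_basisVec, intCastL_basisVec, vQ, vQ]
    abel
  apply le_antisymm
  · rw [Submodule.span_le]
    rintro z ⟨y, ⟨x, ⟨τ, i, j, hij, rfl⟩, rfl⟩, rfl⟩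
    simp only [SetLike.mem_coe]
    rw [hcastdiff]
    exact sub_mem (vQ_mem w τ i) (vQ_mem w τ j)
  · rw [Vw, Submodule.span_le]
    rintro z ⟨⟨τ, a⟩, rfl⟩
    simp only [SetLike.mem_coe]
    have hsum0 : ∑ b, vQ w τ b = 0 := by
      have hcomp : ∑ b, eQ τ (w τ b) = ∑ b, eQ τ b := Equiv.sum_comp (w τ) (eQ τ)
      calc ∑ b, vQ w τ b = ∑ b, (eQ τ (w τ b) - eQ τ b) := rfl
        _ = (∑ b, eQ τ (w τ b)) - ∑ b, eQ τ b := Finset.sum_sub_distrib _ _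
        _ = 0 := by rw [hcomp, sub_self]
    have hn0 : ((n : ℚ)) ≠ 0 := Nat.cast_ne_zero.mpr (by omega)
    have hexp : vQ w τ a = ((n : ℚ))⁻¹ • ∑ b : Fin n, (vQ w τ a - vQ w τ b) := by
      rw [Finset.sum_sub_distrib, hsum0, sub_zero, Finset.sum_const, Finset.card_univ,
        Fintype.card_fin, ← Nat.cast_smul_eq_nsmul ℚ, smul_smul, inv_mul_cancel₀ hn0, one_smul]
    rw [hexp]
    refine Submodule.smul_mem _ _ (Submodule.sum_mem _ fun b _ => ?_)
    by_cases hab : a = b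
    · subst hab
      rw [sub_self]
      exact zero_mem _
    · apply Submodule.subset_span
      exact ⟨actW w (basisVec τ a - basisVec τ b) - (basisVec τ a - basisVec τ b),
        ⟨_, ⟨τ, a, b, hab, rfl⟩, rfl⟩, hcastdiff τ a b⟩

lemma dW_eq (hn : 1 ≤ n) (w : I → Equiv.Perm (Fin n)) :
    dW w = Module.finrank ℚ (Vw w) := by
  rw [dW, finrank_int_span, spanQ_roots hn]

end Cast

section Main

variable {I : Type*} [Fintype I] [DecidableEq I] {n : ℕ}

lemma forward_aux : ∀ (N : ℕ) (w : I → Equiv.Perm (Fin n)), lenW w ≤ N →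
    lenW w = Module.finrank ℚ (Vw w) →
    ∃ l : List (I → Equiv.Perm (Fin n)),
      l.Nodup ∧ (∀ s ∈ l, IsSimpleReflection s) ∧ w = l.prod := by
  intro N
  induction N with
  | zero =>
    intro w hw _
    exact ⟨[], List.nodup_nil, by simp, by
      rw [List.prod_nil, lenW_eq_zero (Nat.le_zero.mp hw)]⟩
  | succ N ih =>
    intro w hw heq
    by_cases h1 : w = 1
    · exact ⟨[], List.nodup_nil, by simp, by rw [List.prod_nil, h1]⟩
    · have hτ : ∃ τ, w τ ≠ 1 := by
        by_contra hc; push_neg at hc; exact h1 (funext hc)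
      obtain ⟨τ, hτ⟩ := hτ
      have hτinv : (w τ)⁻¹ ≠ 1 := fun hc => hτ (by rw [← inv_inv (w τ), hc, inv_one])
      obtain ⟨i, h, hdesc⟩ := exists_descent hτinv
      set s := simpleRefl τ i h with hs_def
      set w' := s * w with hw'
      have hlen : lenW w = lenW w' + 1 := lenW_simple_mul' hdesc
      have hws : w = s * w' := by
        rw [hw', ← mul_assoc, hs_def, simpleRefl_mul_self, one_mul]
      have hsub : Vw w ≤ Vw s ⊔ Vw w' := by
        conv_lhs => rw [hws]
        exact Vw_mul_le _ _
      have hr2 : Module.finrank ℚ (Vw s) ≤ 1 := by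
        rw [hs_def, Vw_simple]
        exact le_of_eq (finrank_span_singleton (betaQ_ne_zero τ i h))
      have hsup := Submodule.finrank_sup_add_finrank_inf_eq (Vw s) (Vw w')
      have hr3 := Submodule.finrank_mono hsub
      have hgen := finrank_Vw_le_lenW (lenW w') w' le_rfl
      have heq' : lenW w' = Module.finrank ℚ (Vw w') := by omega
      obtain ⟨l', hnd', hsimp', hprod'⟩ := ih w' (by omega) heq'
      have hsl' : s ∉ l' := by
        intro hmem
        have hβ : betaQ τ i h ∈ Vw w' := by
          rw [hprod']
          exact beta_mem l' hsimp' hnd' τ i h hmem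
        have hVle : Vw w ≤ Vw w' := by
          refine le_trans hsub (sup_le ?_ le_rfl)
          rw [hs_def, Vw_simple, Submodule.span_le, Set.singleton_subset_iff]
          exact hβ
        have := Submodule.finrank_mono hVle
        omega
      refine ⟨s :: l', List.nodup_cons.mpr ⟨hsl', hnd'⟩, ?_, ?_⟩
      · intro s'' hs''
        rcases List.mem_cons.mp hs'' with heqs | htail
        · rw [heqs, hs_def]
          exact isSimpleReflection_simpleRefl τ i h
        · exact hsimp' _ htail
      · rw [List.prod_cons, ← hprod', hws]

end Main

/-- `ℓ(w) = d_w` if and only if `w` is a product of pairwise distinct simple reflections. -/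
theorem lenW_eq_dW_iff {I : Type*} [Fintype I] [DecidableEq I] [Nonempty I] {n : ℕ}
    (hn : 1 ≤ n) (w : I → Equiv.Perm (Fin n)) :
    lenW w = dW w ↔
      ∃ l : List (I → Equiv.Perm (Fin n)),
        l.Nodup ∧ (∀ s ∈ l, IsSimpleReflection s) ∧ w = l.prod := by
  rw [dW_eq hn w]
  constructor
  · intro he
    exact forward_aux (lenW w) w le_rfl he
  · rintro ⟨l, hnd, hs, rfl⟩
    rw [lenW_prod l hnd hs]
    refine le_antisymm (len_le_finrank_Vw l hnd hs) ?_
    have hg := finrank_Vw_le_lenW (lenW l.prod) l.prod le_rfl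
    rw [lenW_prod l hnd hs] at hg
    exact hg
end

section
/- The ring B has no embedded components: every associated prime of the B-module B is a minimal prime ideal of B. -/
open scoped TensorProduct

/-- Let `A` be a commutative noetherian domain and `B` a finite flat `A`-algebra. Then `B`
has no embedded components: every associated prime of the `B`-module `B` is a minimal prime
ideal of `B`. -/
theorem associatedPrimes_subset_minimalPrimes
    {A B : Type*} [CommRing A] [IsDomain A] [IsNoetherianRing A]
    [CommRing B] [Algebra A B] [Module.Finite A B] [Module.Flat A B] :
    ∀ p ∈ associatedPrimes B B, p ∈ minimalPrimes B := by
  intro p hp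
  obtain ⟨hprime, b, hb⟩ := hp
  have hb0 : b ≠ 0 := by
    rintro rfl
    apply hprime.ne_top
    rw [hb, Ideal.eq_top_iff_one]
    exact Ideal.le_radical (by rw [Submodule.mem_colon_singleton]; simp)
  -- B is torsion-free over A since it is flat and A is a domain
  have hreg : ∀ a : A, a ≠ 0 → IsSMulRegular B a := by
    intro a ha
    have h1 : IsSMulRegular A a := fun x y h =>
      mul_left_cancel₀ ha (by simpa [smul_eq_mul] using h)
    have h2 : IsSMulRegular (B ⊗[A] A) a := h1.lTensor B
    exact h2.of_injective (TensorProduct.rid A B).symm.toLinearMap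
      (TensorProduct.rid A B).symm.injective
  -- p contracts to the zero ideal of A
  have hcomap : p.comap (algebraMap A B) = ⊥ := by
    ext a
    simp only [Ideal.mem_comap, Ideal.mem_bot]
    constructor
    · intro h
      have hab : a • b = 0 := by
        rw [hb] at h
        obtain ⟨n, hn⟩ := Ideal.mem_radical_iff.mp h
        rw [Submodule.mem_colon_singleton, Submodule.mem_bot, ← map_pow, algebraMap_smul] at hn
        by_cases ha : a = 0
        · simp [ha]
        exact absurd (hreg (a ^ n) (pow_ne_zero n ha)
          (by simpa using hn : a ^ n • b = a ^ n • (0 : B))) hb0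
      by_contra ha
      exact hb0 (by simpa using hreg a ha (by simpa using hab : a • b = a • (0 : B)))
    · rintro rfl
      simp [hb]
  -- find a minimal prime below p and show it equals p by incomparability
  obtain ⟨q, hq, hqle⟩ := Ideal.exists_minimalPrimes_le (bot_le : (⊥ : Ideal B) ≤ p)
  have hqprime : q.IsPrime := hq.1.1
  have heq : q = p := by
    by_contra hne
    obtain ⟨x, hxp, hxq⟩ := SetLike.exists_of_lt (lt_of_le_of_ne hqle hne)
    have hlt := Ideal.comap_lt_comap_of_integral_mem_sdiff (R := A) hqle ⟨hxp, hxq⟩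
      (Algebra.IsIntegral.isIntegral x)
    rw [hcomap] at hlt
    exact not_lt_bot hlt
  exact heq ▸ hq
end

section
/- Every permutation w of {1,…,n} can be written as a product w = t_d ∘ t_{d−1} ∘ ⋯ ∘ t_1 of transpositions t_1, …, t_d (for some d ≥ 0) such that: (i) for each i, the two points interchanged by t_i lie in the same orbit of w on {1,…,n}; and (ii) the inversion numbers of the partial products strictly increase, i.e. inv(t_{i+1} ∘ t_i ∘ ⋯ ∘ t_1) > inv(t_i ∘ ⋯ ∘ t_1) for every 0 ≤ i < d, where the empty product is the identity. -/
/-- The partial product `t_i ∘ t_{i-1} ∘ ⋯ ∘ t_1` (where `t_j` is `t (j-1)` in 0-indexed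
form, and the empty product is the identity). -/
def partialProd {n : ℕ} (t : ℕ → Equiv.Perm (Fin n)) (i : ℕ) : Equiv.Perm (Fin n) :=
  (((List.range i).map t).reverse).prod

lemma partialProd_zero {n : ℕ} (t : ℕ → Equiv.Perm (Fin n)) : partialProd t 0 = 1 := by
  simp [partialProd]

lemma partialProd_succ {n : ℕ} (t : ℕ → Equiv.Perm (Fin n)) (i : ℕ) :
    partialProd t (i + 1) = t i * partialProd t i := by
  simp [partialProd, List.range_succ]

lemma partialProd_congr {n : ℕ} {t t' : ℕ → Equiv.Perm (Fin n)} {i : ℕ}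
    (h : ∀ j < i, t' j = t j) : partialProd t' i = partialProd t i := by
  unfold partialProd
  congr 1
  congr 1
  apply List.map_congr_left
  intro j hj
  exact h j (List.mem_range.mp hj)

/-- The key step: any non-identity permutation can be written as `swap c a * w'`
with `c, a` in the same cycle of `w`, `numInversions w' < numInversions w`, and
cycles of `w'` refining those of `w`. -/
lemma step_lemma {n : ℕ} (w : Equiv.Perm (Fin n)) (hw : w ≠ 1) :
    ∃ (w' : Equiv.Perm (Fin n)) (c a : Fin n), c ≠ a ∧ w = Equiv.swap c a * w' ∧
      w.SameCycle c a ∧ numInversions w' < numInversions w ∧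
      ∀ x y : Fin n, w'.SameCycle x y → w.SameCycle x y := by
  classical
  have hS : w.support.Nonempty := by
    rw [Finset.nonempty_iff_ne_empty]
    intro h
    exact hw (Equiv.Perm.support_eq_empty_iff.mp h)
  set a : Fin n := w.support.max' hS with ha_def
  have ha : a ∈ w.support := Finset.max'_mem _ _
  have hmax : ∀ x ∈ w.support, x ≤ a := fun x hx => Finset.le_max' _ _ hx
  have haw : w a ≠ a := Equiv.Perm.mem_support.mp ha
  set c : Fin n := w a with hc_def
  have hcS : c ∈ w.support := Equiv.Perm.apply_mem_support.mpr ha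
  have hca : c < a := lt_of_le_of_ne (hmax _ hcS) haw
  set b : Fin n := w⁻¹ a with hb_def
  have hwb : w b = a := by simp [hb_def]
  have hba_ne : b ≠ a := by
    intro h
    have h2 := hwb
    rw [h] at h2
    exact haw h2
  have hbS : b ∈ w.support := Equiv.Perm.mem_support.mpr (by rw [hwb]; exact hba_ne.symm)
  have hba : b < a := lt_of_le_of_ne (hmax _ hbS) hba_ne
  -- The permutation a = w x ↔ x = b
  have hwa_iff : ∀ x : Fin n, w x = a ↔ x = b := by
    intro x
    constructor
    · intro h; rw [hb_def, ← h]; simp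
    · intro h; rw [h, hwb]
  set w' : Equiv.Perm (Fin n) := w * Equiv.swap b a with hw'_def
  have hw'b : w' b = c := by simp [hw'_def, Equiv.swap_apply_left, hc_def]
  have hw'a : w' a = a := by simp [hw'_def, Equiv.swap_apply_right, hwb]
  have hw'x : ∀ x : Fin n, x ≠ b → x ≠ a → w' x = w x := by
    intro x hxb hxa
    simp [hw'_def, Equiv.swap_apply_of_ne_of_ne hxb hxa]
  -- points below `a` (other than b) stay below `a`
  have hlt : ∀ x : Fin n, x < a → x ≠ b → w x < a := by
    intro x hx hxb
    by_cases hxS : x ∈ w.support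
    · have h1 : w x ∈ w.support := Equiv.Perm.apply_mem_support.mpr hxS
      have h2 : w x ≤ a := hmax _ h1
      have h3 : w x ≠ a := fun h => hxb ((hwa_iff x).mp h)
      exact lt_of_le_of_ne h2 h3
    · rw [Equiv.Perm.notMem_support.mp hxS]; exact hx
  have hlt' : ∀ x : Fin n, x < a → w' x < a := by
    intro x hx
    by_cases hxb : x = b
    · rw [hxb, hw'b]; exact hca
    · rw [hw'x x hxb (ne_of_lt hx)]; exact hlt x hx hxb
  have hfix : ∀ x : Fin n, a < x → w x = x := by
    intro x hx
    by_contra h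
    exact absurd (hmax x (Equiv.Perm.mem_support.mpr h)) (not_le.mpr hx)
  -- inversion sets
  set I : Equiv.Perm (Fin n) → Finset (Fin n × Fin n) :=
    fun σ => Finset.univ.filter fun p : Fin n × Fin n => p.1 < p.2 ∧ σ p.2 < σ p.1 with hI
  have hIk : ∀ σ (p : Fin n × Fin n), p ∈ I σ ↔ p.1 < p.2 ∧ σ p.2 < σ p.1 := by
    intro σ p; simp [hI]
  have hmemba : (b, a) ∈ I w := by
    rw [hIk]
    exact ⟨hba, by rw [hwb]; exact hca⟩
  -- injection from I w' into (I w).erase (b, a)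
  have hcard : numInversions w' < numInversions w := by
    have hle : (I w').card ≤ ((I w).erase (b, a)).card := by
      apply Finset.card_le_card_of_injOn (fun p => if p.2 = b then (p.1, a) else p)
      · -- maps into
        rintro ⟨p, q⟩ hp
        rw [Finset.mem_coe] at hp ⊢
        beta_reduce
        rw [hIk] at hp
        obtain ⟨hpq, hinv⟩ := hp
        -- first : q < a
        have hqa : q < a := by
          rcases lt_trichotomy q a with h | h | h
          · exact h
          · exfalso; rw [h, hw'a] at hinv
            exact absurd (hlt' p (h ▸ hpq)) (not_lt.mpr (le_of_lt hinv))
          · exfalso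
            have hq' : w' q = q := by
              rw [hw'x q (fun hh => absurd (hh ▸ h) (not_lt.mpr (le_of_lt hba)))
                (ne_of_gt h)]
              exact hfix q h
            rw [hq'] at hinv
            rcases lt_trichotomy p a with h2 | h2 | h2
            · exact absurd (lt_trans (hlt' p h2) h) (not_lt.mpr (le_of_lt hinv))
            · rw [h2, hw'a] at hinv; exact absurd h (not_lt.mpr (le_of_lt hinv))
            · have hp' : w' p = p := by
                rw [hw'x p (fun hh => absurd (hh ▸ h2) (not_lt.mpr (le_of_lt hba)))
                  (ne_of_gt h2)]
                exact hfix p h2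
              rw [hp'] at hinv
              exact absurd hpq (not_lt.mpr (le_of_lt hinv))
        have hpa : p < a := lt_trans hpq hqa
        by_cases hqb : q = b
        · -- maps to (p, a)
          subst hqb
          have hif : (if ((p, b) : Fin n × Fin n).2 = b then (((p, b) : Fin n × Fin n).1, a)
              else (p, b)) = (p, a) := if_pos rfl
          rw [hif]
          have hpb : p ≠ b := ne_of_lt hpq
          rw [hw'b, hw'x p hpb (ne_of_lt hpa)] at hinv
          apply Finset.mem_erase.mpr
          constructor
          · intro hcon
            exact (ne_of_lt hpq) (congrArg Prod.fst hcon)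
          · rw [hIk]
            exact ⟨hpa, hinv⟩
        · rw [if_neg hqb]
          have hqa' : q ≠ a := ne_of_lt hqa
          rw [hw'x q hqb hqa'] at hinv
          apply Finset.mem_erase.mpr
          constructor
          · intro hcon
            exact hqa' (congrArg Prod.snd hcon)
          · rw [hIk]
            by_cases hpb : p = b
            · subst hpb
              rw [hw'b] at hinv
              refine ⟨hpq, ?_⟩
              rw [hwb]
              exact lt_trans hinv hca
            · rw [hw'x p hpb (ne_of_lt hpa)] at hinv
              exact ⟨hpq, hinv⟩
      · -- injective
        rintro ⟨p, q⟩ hp ⟨p', q'⟩ hp' heq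
        have hq'lt : ∀ (u v : Fin n), (u, v) ∈ I w' → v ≠ a := by
          rintro u v huv rfl
          rw [hIk] at huv
          obtain ⟨h1, h2⟩ := huv
          rw [hw'a] at h2
          exact absurd (hlt' u h1) (not_lt.mpr (le_of_lt h2))
        have hmem : (p, q) ∈ I w' := Finset.mem_coe.mp hp
        have hmem' : (p', q') ∈ I w' := Finset.mem_coe.mp hp'
        dsimp only at heq
        by_cases h1 : q = b <;> by_cases h2 : q' = b
        · rw [if_pos h1, if_pos h2] at heq
          rw [Prod.mk.injEq] at heq
          rw [h1, h2]
          exact Prod.ext heq.1 rfl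
        · exfalso
          rw [if_pos h1, if_neg h2] at heq
          exact hq'lt p' q' hmem' (congrArg Prod.snd heq).symm
        · exfalso
          rw [if_neg h1, if_pos h2] at heq
          exact hq'lt p q hmem (congrArg Prod.snd heq)
        · rw [if_neg h1, if_neg h2] at heq
          exact heq
    calc numInversions w' ≤ ((I w).erase (b, a)).card := hle
      _ < (I w).card := Finset.card_erase_lt_of_mem hmemba
  -- w = swap c a * w'
  have hdecomp : w = Equiv.swap c a * w' := by
    have h1 : Equiv.swap c a = Equiv.swap (w a) (w b) := by rw [hc_def, hwb]
    rw [h1, Equiv.swap_apply_apply, hw'_def]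
    group
    rw [Equiv.swap_comm]
    simp [mul_assoc, Equiv.swap_mul_self]
  -- SameCycle transfer
  have hpoint : ∀ x : Fin n, w.SameCycle x (w' x) := by
    intro x
    by_cases hxa : x = a
    · rw [hxa, hw'a]
    · by_cases hxb : x = b
      · rw [hxb, hw'b]
        refine ⟨2, ?_⟩
        have : (w ^ (2 : ℤ)) b = w (w b) := by
          rw [zpow_two]; rfl
        rw [this, hwb]
      · rw [hw'x x hxb hxa]
        exact ⟨1, by simp⟩
  have htransfer : ∀ x y : Fin n, w'.SameCycle x y → w.SameCycle x y := by
    intro x y hxy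
    obtain ⟨i, -, rfl⟩ := hxy.exists_pow_eq'
    clear hxy
    induction i with
    | zero =>
      simp only [pow_zero, Equiv.Perm.one_apply, Equiv.Perm.coe_one, id_eq]
      exact Equiv.Perm.SameCycle.refl w x
    | succ k ih =>
      have : (w' ^ (k + 1)) x = w' ((w' ^ k) x) := by
        rw [pow_succ']; rfl
      rw [this]
      exact ih.trans (hpoint _)
  have hscca : w.SameCycle c a := by
    have h1 : w.SameCycle a c := ⟨1, by simp [hc_def]⟩
    exact h1.symm
  exact ⟨w', c, a, ne_of_lt hca, hdecomp, hscca, hcard, htransfer⟩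

/-- Every permutation `w` of `{1,…,n}` can be written as a product `t_d ∘ ⋯ ∘ t_1` of
transpositions such that each `t_i` interchanges two points lying in the same orbit of `w`,
and the inversion numbers of the partial products strictly increase. -/
theorem exists_transposition_decomposition {n : ℕ} (w : Equiv.Perm (Fin n)) :
    ∃ (d : ℕ) (t : ℕ → Equiv.Perm (Fin n)),
      (∀ i < d, ∃ a b : Fin n, a ≠ b ∧ t i = Equiv.swap a b ∧ w.SameCycle a b) ∧
      w = partialProd t d ∧
      ∀ i < d, numInversions (partialProd t i) < numInversions (partialProd t (i + 1)) := by
  classical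
  suffices H : ∀ (N : ℕ) (w : Equiv.Perm (Fin n)), numInversions w ≤ N →
      ∃ (d : ℕ) (t : ℕ → Equiv.Perm (Fin n)),
        (∀ i < d, ∃ a b : Fin n, a ≠ b ∧ t i = Equiv.swap a b ∧ w.SameCycle a b) ∧
        w = partialProd t d ∧
        ∀ i < d, numInversions (partialProd t i) < numInversions (partialProd t (i + 1)) by
    exact H (numInversions w) w le_rfl
  intro N
  induction N with
  | zero =>
    intro w hw
    by_cases h1 : w = 1
    · refine ⟨0, fun _ => 1, by simp, by rw [partialProd_zero]; exact h1, by simp⟩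
    · obtain ⟨w', c, a, _, _, _, hlt, _⟩ := step_lemma w h1
      omega
  | succ N ih =>
    intro w hw
    by_cases h1 : w = 1
    · refine ⟨0, fun _ => 1, by simp, by rw [partialProd_zero]; exact h1, by simp⟩
    · obtain ⟨w', c, a, hca, hdecomp, hsc, hlt, htrans⟩ := step_lemma w h1
      obtain ⟨d, t, ht1, ht2, ht3⟩ := ih w' (by omega)
      set t' : ℕ → Equiv.Perm (Fin n) := fun i => if i = d then Equiv.swap c a else t i
        with ht'
      have hpp : ∀ i ≤ d, partialProd t' i = partialProd t i := by
        intro i hi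
        apply partialProd_congr
        intro j hj
        simp [ht', Nat.ne_of_lt (lt_of_lt_of_le hj hi)]
      have hppd1 : partialProd t' (d + 1) = w := by
        rw [partialProd_succ, hpp d le_rfl, ← ht2]
        simp only [ht', if_pos rfl]
        exact hdecomp.symm
      refine ⟨d + 1, t', ?_, hppd1.symm, ?_⟩
      · intro i hi
        rcases Nat.lt_succ_iff_lt_or_eq.mp hi with h | h
        · obtain ⟨x, y, hxy, hteq, hscxy⟩ := ht1 i h
          exact ⟨x, y, hxy, by simp [ht', Nat.ne_of_lt h, hteq], htrans x y hscxy⟩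
        · exact ⟨c, a, hca, by simp [ht', h], hsc⟩
      · intro i hi
        rcases Nat.lt_succ_iff_lt_or_eq.mp hi with h | h
        · rw [hpp i (le_of_lt h), hpp (i + 1) h]
          exact ht3 i h
        · subst h
          rw [hppd1, hpp i le_rfl, ← ht2]
          exact hlt
end

section
/- Let w ∈ S_n, let k_1 > k_2 > ⋯ > k_n be integers, and let s ∈ L^n satisfy s_{w^{-1}(i)} = s_i for all 1 ≤ i ≤ n. Define λ ∈ L^n by λ_i := k_i + s_i + (i−1). Then w ⋅ λ, which is given explicitly by (w ⋅ λ)_i = k_{w^{-1}(i)} + s_i + (i−1), is strongly linked to λ, i.e. w ⋅ λ ↑ λ. -/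
/-- The dot action of `S_n` on `L^n`: `(w ⋅ λ)_i = λ_{w⁻¹(i)} + (i - w⁻¹(i))`. -/
def dotAct {L : Type*} [Field L] {n : ℕ} (w : Equiv.Perm (Fin n)) (lam : Fin n → L) :
    Fin n → L :=
  fun i => lam (w⁻¹ i) + ((i : ℕ) : L) - (((w⁻¹ i : Fin n) : ℕ) : L)

/-- `μ ≤ ν` for the standard order on weights: `ν - μ` is a nonnegative integer combination
of the simple roots `e_i - e_{i+1}`, i.e. the total sum of `ν - μ` vanishes and all partial
sums are nonnegative integers. -/
def WtLE {L : Type*} [Field L] {n : ℕ} (μ ν : Fin n → L) : Prop :=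
  (∑ i, (ν i - μ i)) = 0 ∧
    ∀ j : Fin n, ∃ m : ℕ,
      (∑ i ∈ Finset.univ.filter (fun i => i ≤ j), (ν i - μ i)) = (m : L)

/-- `μ` is strongly linked to `λ` (written `μ ↑ λ`): there is a chain
`λ = ν_0, ν_1, …, ν_m = μ` with `ν_r = s_{(i_r j_r)} ⋅ ν_{r-1}` for some transposition and
`ν_r ≤ ν_{r-1}` for every `r`. -/
def StronglyLinked {L : Type*} [Field L] {n : ℕ} (μ lam : Fin n → L) : Prop :=
  ∃ (m : ℕ) (ν : ℕ → Fin n → L), ν 0 = lam ∧ ν m = μ ∧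
    ∀ r < m, ∃ σ : Equiv.Perm (Fin n),
      σ.IsSwap ∧ ν (r + 1) = dotAct σ (ν r) ∧ WtLE (ν (r + 1)) (ν r)

private lemma chain_aux {L : Type*} [Field L] [CharZero L] {n : ℕ}
    (k : Fin n → ℤ) (hk : StrictAnti k) (s : Fin n → L) :
    ∀ (N : ℕ) (u : Equiv.Perm (Fin n)), u.support.card ≤ N → (∀ x, s (u x) = s x) →
      StronglyLinked (fun x => (k (u x) : L) + s x + ((x : ℕ) : L))
        (fun x => (k x : L) + s x + ((x : ℕ) : L)) := by
  intro N
  induction N with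
  | zero =>
      intro u hcard _
      have hu : u = 1 := Equiv.Perm.support_eq_empty_iff.mp
        (Finset.card_eq_zero.mp (Nat.le_zero.mp hcard))
      subst hu
      exact ⟨0, fun _ => fun x => (k x : L) + s x + ((x : ℕ) : L),
        rfl, by funext x; simp, fun r hr => absurd hr (by omega)⟩
  | succ N ih =>
      intro u hcard hsu
      by_cases hu : u = 1
      · subst hu
        exact ⟨0, fun _ => fun x => (k x : L) + s x + ((x : ℕ) : L),
          rfl, by funext x; simp, fun r hr => absurd hr (by omega)⟩
      · have hsupp : u.support.Nonempty := by
          rw [Finset.nonempty_iff_ne_empty]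
          simpa [Equiv.Perm.support_eq_empty_iff] using hu
        set i := u.support.min' hsupp with hidef
        have hiu : u i ≠ i := Equiv.Perm.mem_support.mp (u.support.min'_mem hsupp)
        have hfix : ∀ y, y < i → u y = y := by
          intro y hy
          by_contra h
          exact absurd (u.support.min'_le y (Equiv.Perm.mem_support.mpr h)) (not_le.mpr hy)
        have hui : i < u i := by
          rcases lt_trichotomy (u i) i with h | h | h
          · exact absurd (u.injective (hfix (u i) h)) hiu
          · exact absurd h hiu
          · exact h
        set j := u⁻¹ i with hjdef
        have huj : u j = i := u.apply_symm_apply i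
        have hij : i < j := by
          rcases lt_trichotomy j i with h | h | h
          · rw [hfix j h] at huj; exact absurd huj (ne_of_lt h)
          · rw [h] at huj; exact absurd huj hiu
          · exact h
        set u' := u * Equiv.swap i j with hu'def
        have hu'app : ∀ x, u' x = u (Equiv.swap i j x) := fun x => Equiv.Perm.mul_apply u _ x
        have hui' : u' i = i := by rw [hu'app, Equiv.swap_apply_left, huj]
        have huj' : u' j = u i := by rw [hu'app, Equiv.swap_apply_right]
        have hux' : ∀ x, x ≠ i → x ≠ j → u' x = u x := by
          intro x hxi hxj
          rw [hu'app, Equiv.swap_apply_of_ne_of_ne hxi hxj]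
        have hsij : s i = s j := by rw [← huj]; exact hsu j
        have hsσ : ∀ x, s (Equiv.swap i j x) = s x := by
          intro x
          rcases eq_or_ne x i with rfl | hxi
          · rw [Equiv.swap_apply_left]; exact hsij.symm
          rcases eq_or_ne x j with rfl | hxj
          · rw [Equiv.swap_apply_right]; exact hsij
          · rw [Equiv.swap_apply_of_ne_of_ne hxi hxj]
        have hsu' : ∀ x, s (u' x) = s x := by
          intro x; rw [hu'app, hsu, hsσ]
        have hsub : u'.support ⊆ u.support.erase i := by
          intro x hx
          rw [Equiv.Perm.mem_support] at hx
          rw [Finset.mem_erase, Equiv.Perm.mem_support]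
          refine ⟨?_, ?_⟩
          · rintro rfl; exact hx hui'
          · rcases eq_or_ne x i with rfl | hxi
            · exact absurd hui' hx
            rcases eq_or_ne x j with rfl | hxj
            · rw [huj]; exact hij.ne
            · rw [← hux' x hxi hxj]; exact hx
        have hcard' : u'.support.card ≤ N := by
          have h1 : u'.support.card ≤ (u.support.erase i).card := Finset.card_le_card hsub
          have h2 : (u.support.erase i).card = u.support.card - 1 :=
            Finset.card_erase_of_mem (u.support.min'_mem hsupp)
          have h3 : 1 ≤ u.support.card := Finset.card_pos.mpr hsupp
          omega
        obtain ⟨m, ν, h0, hm, hstep⟩ := ih u' hcard' hsu'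
        -- the difference function
        set d : ℤ := k i - k (u i) with hddef
        have hd : 0 < d := sub_pos.mpr (hk hui)
        set g : Fin n → ℤ :=
          fun x => (if x = i then d else 0) + (if x = j then -d else 0) with hgdef
        have hdiff : ∀ x : Fin n,
            (((k (u' x) : L) + s x + ((x : ℕ) : L)) - ((k (u x) : L) + s x + ((x : ℕ) : L)))
              = ((g x : ℤ) : L) := by
          intro x
          rcases eq_or_ne x i with rfl | hxi
          · simp only [hgdef, if_pos rfl, if_neg hij.ne, add_zero, hui']
            push_cast [hddef]; ring
          rcases eq_or_ne x j with rfl | hxj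
          · simp only [hgdef, if_neg hij.ne', if_pos rfl, zero_add, huj', huj]
            push_cast [hddef]; ring
          · simp only [hgdef, if_neg hxi, if_neg hxj, add_zero, hux' x hxi hxj]
            push_cast; ring
        have hdot : (fun x => (k (u x) : L) + s x + ((x : ℕ) : L))
            = dotAct (Equiv.swap i j)
                (fun x => (k (u' x) : L) + s x + ((x : ℕ) : L)) := by
          funext x
          simp only [dotAct, Equiv.swap_inv]
          rw [hu'app, Equiv.swap_apply_self, hsσ]
          ring
        have hwt : WtLE (fun x => (k (u x) : L) + s x + ((x : ℕ) : L))
            (fun x => (k (u' x) : L) + s x + ((x : ℕ) : L)) := by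
          constructor
          · rw [Finset.sum_congr rfl (fun x _ => hdiff x)]
            have hg : (∑ x : Fin n, g x) = 0 := by
              simp [hgdef, Finset.sum_add_distrib, Finset.sum_ite_eq']
            exact_mod_cast hg
          · intro t
            rw [Finset.sum_congr rfl (fun x _ => hdiff x)]
            have hmemi : (i ∈ Finset.univ.filter (fun x => x ≤ t)) ↔ i ≤ t := by simp
            have hmemj : (j ∈ Finset.univ.filter (fun x => x ≤ t)) ↔ j ≤ t := by simp
            have hS : (∑ x ∈ Finset.univ.filter (fun x => x ≤ t), g x)
                = (if i ≤ t then d else 0) + (if j ≤ t then -d else 0) := by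
              rw [hgdef]
              rw [Finset.sum_add_distrib, Finset.sum_ite_eq', Finset.sum_ite_eq']
              rw [if_congr hmemi rfl rfl, if_congr hmemj rfl rfl]
            by_cases hjt : j ≤ t
            · have hit : i ≤ t := (le_of_lt hij).trans hjt
              refine ⟨0, ?_⟩
              have : (∑ x ∈ Finset.univ.filter (fun x => x ≤ t), g x) = 0 := by
                rw [hS, if_pos hit, if_pos hjt]; ring
              exact_mod_cast this
            · by_cases hit : i ≤ t
              · refine ⟨d.toNat, ?_⟩
                have : (∑ x ∈ Finset.univ.filter (fun x => x ≤ t), g x) = (d.toNat : ℤ) := by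
                  rw [hS, if_pos hit, if_neg hjt, Int.toNat_of_nonneg hd.le]; ring
                exact_mod_cast this
              · refine ⟨0, ?_⟩
                have : (∑ x ∈ Finset.univ.filter (fun x => x ≤ t), g x) = 0 := by
                  rw [hS, if_neg hit, if_neg hjt]; ring
                exact_mod_cast this
        refine ⟨m + 1,
          fun r => if r = m + 1 then (fun x => (k (u x) : L) + s x + ((x : ℕ) : L)) else ν r,
          ?_, ?_, ?_⟩
        · dsimp only; rw [if_neg (by omega)]; exact h0
        · dsimp only; rw [if_pos rfl]
        · intro r hr
          by_cases hrm : r = m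
          · subst hrm
            refine ⟨Equiv.swap i j, ⟨i, j, hij.ne, rfl⟩, ?_, ?_⟩
            · dsimp only; rw [if_pos rfl, if_neg (by omega), hm]; exact hdot
            · dsimp only; rw [if_pos rfl, if_neg (by omega), hm]; exact hwt
          · have hr' : r < m := by omega
            obtain ⟨σ, hσ1, hσ2, hσ3⟩ := hstep r hr'
            refine ⟨σ, hσ1, ?_, ?_⟩
            · dsimp only; rw [if_neg (by omega), if_neg (by omega)]; exact hσ2
            · dsimp only; rw [if_neg (by omega), if_neg (by omega)]; exact hσ3

/-- Let `w ∈ S_n`, `k_1 > ⋯ > k_n` integers, and `s ∈ L^n` with `s_{w⁻¹(i)} = s_i` for all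
`i`. Set `λ_i := k_i + s_i + (i-1)`. Then `w ⋅ λ`, given explicitly by
`(w ⋅ λ)_i = k_{w⁻¹(i)} + s_i + (i-1)`, is strongly linked to `λ`. -/
theorem dotAct_stronglyLinked {L : Type*} [Field L] [CharZero L] {n : ℕ} (hn : 1 ≤ n)
    (w : Equiv.Perm (Fin n)) (k : Fin n → ℤ) (hk : StrictAnti k)
    (s : Fin n → L) (hs : ∀ i, s (w⁻¹ i) = s i)
    (lam : Fin n → L) (hlam : ∀ i, lam i = (k i : L) + s i + ((i : ℕ) : L)) :
    (∀ i, dotAct w lam i = ((k (w⁻¹ i) : L) + s i + ((i : ℕ) : L))) ∧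
      StronglyLinked (dotAct w lam) lam := by
  have h1 : ∀ i, dotAct w lam i = ((k (w⁻¹ i) : L) + s i + ((i : ℕ) : L)) := by
    intro i
    simp only [dotAct]
    rw [hlam (w⁻¹ i), hs i]
    ring
  refine ⟨h1, ?_⟩
  have h2 : dotAct w lam = fun x => (k (w⁻¹ x) : L) + s x + ((x : ℕ) : L) := funext h1
  have h3 : lam = fun x => (k x : L) + s x + ((x : ℕ) : L) := funext hlam
  rw [h2, h3]
  exact chain_aux k hk s (w⁻¹).support.card w⁻¹ le_rfl hs
end
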